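/- arXiv:2201.01969 — 4 statements merged into one kernel-verified Lean document; each statement's English description precedes it below -/
import Mathlib

section
/- Let N ≥ 1 and let A be an N×N real matrix with nonnegative entries that is doubly stochastic (all row sums and all column sums equal 1). Assume additionally that every diagonal entry of A is strictly positive and that A is irreducible, i.e., for all indices i, j there exists k ≥ 1 with (A^k)_{ij} > 0. Then ‖A − J‖ < 1, where J = (1/N)·𝟙𝟙ᵀ is the N×N matrix with every entry 1/N and ‖·‖ denotes the spectral norm (the operator norm induced by the Euclidean vector norm). -/
/-!
`A` fixes the constant vectors and `J` is the orthogonal projection onto them, so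
`(A - J) x = A y` for the mean-zero vector `y = x - J x`, and `‖y‖ ≤ ‖x‖`. With the doubly
stochastic Gram matrix `M = Aᵀ A`, `‖y‖² - ‖A y‖² = ½ ∑ᵢⱼ Mᵢⱼ (yᵢ - yⱼ)²`, and
`Mᵢⱼ ≥ Aᵢᵢ Aᵢⱼ > 0` along every edge of `A` because the diagonal is positive. Hence
`‖A y‖ = ‖y‖` forces `y` to be constant along the edges of `A`, so constant by irreducibility,
so zero. Compactness of the unit sphere turns this strict contraction into `‖A - J‖ < 1`.
-/

open Matrix
open scoped Matrix.Norms.L2Operator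

theorem ContinuousLinearMap.opNorm_lt_one_of_norm_apply_lt {E F : Type*}
    [NormedAddCommGroup E] [NormedSpace ℝ E] [ProperSpace E]
    [SeminormedAddCommGroup F] [NormedSpace ℝ F]
    (f : E →L[ℝ] F) (h : ∀ x, x ≠ 0 → ‖f x‖ < ‖x‖) : ‖f‖ < 1 := by
  rw [← f.sSup_sphere_eq_norm]
  rcases ((Metric.sphere (0 : E) 1).image fun x => ‖f x‖).eq_empty_or_nonempty with hempty | hne
  · simp [hempty]
  obtain ⟨x, hx, hfx⟩ := ((isCompact_sphere (0 : E) 1).image (by fun_prop)).sSup_mem hne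
  rw [← hfx, ← mem_sphere_zero_iff_norm.1 hx]
  exact h x (by rintro rfl; simp at hx)

theorem eq_zero_of_sum_eq_zero_of_forall_apply_eq {n : Type*} [Fintype n] {y : n → ℝ}
    (hsum : ∑ i, y i = 0) (hconst : ∀ i j, y i = y j) : y = 0 := by
  funext i
  have : Nonempty n := ⟨i⟩
  have hcard : (Fintype.card n : ℝ) ≠ 0 := Nat.cast_ne_zero.2 Fintype.card_ne_zero
  have : ∑ j, y j = Fintype.card n * y i := by simp [hconst _ i]
  simpa [hcard, hsum] using this.symm

namespace Matrix

theorem IsIrreducible.apply_eq_of_forall_pos {n R α : Type*} [Ring R] [LinearOrder R]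
    {A : Matrix n n R} (hA : A.IsIrreducible) {y : n → α}
    (hy : ∀ i j, 0 < A i j → y i = y j) (i j : n) : y i = y j := by
  let := toQuiver A
  obtain ⟨p, -⟩ := hA.connected i j
  induction p with
  | nil => rfl
  | cons _ e ih => exact ih.trans (hy _ _ e.down)

variable {n : Type*} [Fintype n]

theorem l2_opNorm_lt_one_of_dotProduct_mulVec_lt [DecidableEq n] {B : Matrix n n ℝ}
    (h : ∀ x, x ≠ 0 → B *ᵥ x ⬝ᵥ B *ᵥ x < x ⬝ᵥ x) : ‖B‖ < 1 := by
  rw [← l2_opNorm_toEuclideanCLM]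
  refine (toEuclideanCLM (n := n) (𝕜 := ℝ) B).opNorm_lt_one_of_norm_apply_lt fun x hx => ?_
  rw [← sq_lt_sq₀ (norm_nonneg _) (norm_nonneg _), ← real_inner_self_eq_norm_sq,
    ← real_inner_self_eq_norm_sq, EuclideanSpace.inner_eq_star_dotProduct,
    EuclideanSpace.inner_eq_star_dotProduct]
  simpa using h (WithLp.ofLp x) (by simpa using hx)

theorem dotProduct_self_sub_dotProduct_mulVec [DecidableEq n] {M : Matrix n n ℝ}
    (hM : M ∈ doublyStochastic ℝ n) (y : n → ℝ) :
    y ⬝ᵥ y - y ⬝ᵥ M *ᵥ y = (∑ i, ∑ j, M i j * (y i - y j) ^ 2) / 2 := by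
  have hrow : ∑ i, ∑ j, M i j * y i ^ 2 = y ⬝ᵥ y := by
    simp [← Finset.sum_mul, sum_row_of_mem_doublyStochastic hM, dotProduct, sq]
  have hcol : ∑ i, ∑ j, M i j * y j ^ 2 = y ⬝ᵥ y := by
    rw [Finset.sum_comm]
    simp [← Finset.sum_mul, sum_col_of_mem_doublyStochastic hM, dotProduct, sq]
  have hcross : ∑ i, ∑ j, M i j * (y i * y j) = y ⬝ᵥ M *ᵥ y := by
    simp only [dotProduct, mulVec, Finset.mul_sum]
    exact Fintype.sum_congr _ _ fun i => Fintype.sum_congr _ _ fun j => by ring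
  have hexpand : ∀ i j, M i j * (y i - y j) ^ 2 =
      M i j * y i ^ 2 + M i j * y j ^ 2 - 2 * (M i j * (y i * y j)) := fun i j => by ring
  simp only [hexpand, Finset.sum_sub_distrib, Finset.sum_add_distrib, ← Finset.mul_sum, hrow,
    hcol, hcross]
  ring

theorem mul_apply_le_transpose_mul_self_apply {A : Matrix n n ℝ} (hA : ∀ i j, 0 ≤ A i j)
    (i j : n) : A i i * A i j ≤ (Aᵀ * A) i j := by
  rw [mul_apply]
  exact Finset.single_le_sum (f := fun k => Aᵀ i k * A k j)
    (fun k _ => mul_nonneg (hA k i) (hA k j)) (Finset.mem_univ i)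

theorem dotProduct_mulVec_self_lt [DecidableEq n] {A : Matrix n n ℝ}
    (hA : A ∈ doublyStochastic ℝ n) (hdiag : ∀ i, 0 < A i i) (hirr : A.IsIrreducible)
    {y : n → ℝ} (hsum : ∑ i, y i = 0) (hy : y ≠ 0) : A *ᵥ y ⬝ᵥ A *ᵥ y < y ⬝ᵥ y := by
  have hM : Aᵀ * A ∈ doublyStochastic ℝ n :=
    mul_mem (transpose_mem_doublyStochastic_iff.2 hA) hA
  have hgram : A *ᵥ y ⬝ᵥ A *ᵥ y = y ⬝ᵥ (Aᵀ * A) *ᵥ y := by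
    rw [← mulVec_mulVec, dotProduct_mulVec y Aᵀ, vecMul_transpose]
  have hterm : ∀ i j, 0 ≤ (Aᵀ * A) i j * (y i - y j) ^ 2 := fun i j =>
    mul_nonneg (nonneg_of_mem_doublyStochastic hM) (sq_nonneg _)
  suffices 0 < ∑ i, ∑ j, (Aᵀ * A) i j * (y i - y j) ^ 2 by
    linarith [dotProduct_self_sub_dotProduct_mulVec hM y]
  refine (Fintype.sum_nonneg fun i => Fintype.sum_nonneg (hterm i)).lt_of_ne fun hzero => hy ?_
  have hedge : ∀ i j, 0 < A i j → y i = y j := by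
    intro i j hij
    have hMij : 0 < (Aᵀ * A) i j := (mul_pos (hdiag i) hij).trans_le
      (mul_apply_le_transpose_mul_self_apply (A := A)
        (fun _ _ => nonneg_of_mem_doublyStochastic hA) i j)
    have hrow := (Fintype.sum_eq_zero_iff_of_nonneg fun i => Fintype.sum_nonneg (hterm i)).1
      hzero.symm
    have hij0 := congrFun ((Fintype.sum_eq_zero_iff_of_nonneg (hterm i)).1 (congrFun hrow i)) j
    simpa [hMij.ne', sub_eq_zero] using hij0
  exact eq_zero_of_sum_eq_zero_of_forall_apply_eq hsum (hirr.apply_eq_of_forall_pos hedge)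

section Centering

variable {J : Matrix n n ℝ}

theorem mulVec_eq_const_of_forall_apply (hJ : ∀ i j, J i j = 1 / Fintype.card n) (x : n → ℝ) :
    J *ᵥ x = Function.const n ((∑ j, x j) / Fintype.card n) := by
  funext i
  simp [mulVec, dotProduct, hJ, ← Finset.mul_sum, div_eq_inv_mul]

theorem sum_sub_mulVec_eq_zero (hJ : ∀ i j, J i j = 1 / Fintype.card n) (x : n → ℝ) :
    ∑ i, (x - J *ᵥ x) i = 0 := by
  rcases isEmpty_or_nonempty n with hn | hn
  · simp
  have hcard : (Fintype.card n : ℝ) ≠ 0 := Nat.cast_ne_zero.2 Fintype.card_ne_zero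
  simp [mulVec_eq_const_of_forall_apply hJ, Finset.sum_sub_distrib, mul_div_cancel₀ _ hcard]

theorem dotProduct_sub_mulVec_le (hJ : ∀ i j, J i j = 1 / Fintype.card n) (x : n → ℝ) :
    (x - J *ᵥ x) ⬝ᵥ (x - J *ᵥ x) ≤ x ⬝ᵥ x := by
  set y := x - J *ᵥ x
  have horth : y ⬝ᵥ J *ᵥ x = 0 := by
    rw [mulVec_eq_const_of_forall_apply hJ]
    simp only [dotProduct, Function.const_apply, ← Finset.sum_mul]
    rw [sum_sub_mulVec_eq_zero hJ x, zero_mul]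
  calc y ⬝ᵥ y ≤ y ⬝ᵥ y + J *ᵥ x ⬝ᵥ J *ᵥ x :=
        le_add_of_nonneg_right (Fintype.sum_nonneg fun i => mul_self_nonneg _)
    _ = (y + J *ᵥ x) ⬝ᵥ (y + J *ᵥ x) := by
        simp only [add_dotProduct, dotProduct_add, dotProduct_comm (J *ᵥ x) y, horth]
        ring
    _ = x ⬝ᵥ x := by rw [sub_add_cancel]

theorem sub_mulVec_eq_mulVec_sub [DecidableEq n] {A : Matrix n n ℝ} (hA : A *ᵥ 1 = 1)
    (hJ : ∀ i j, J i j = 1 / Fintype.card n) (x : n → ℝ) :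
    (A - J) *ᵥ x = A *ᵥ (x - J *ᵥ x) := by
  have hconst : J *ᵥ x = ((∑ j, x j) / Fintype.card n) • 1 := by
    rw [mulVec_eq_const_of_forall_apply hJ]
    funext i
    simp
  rw [sub_mulVec, mulVec_sub, hconst, mulVec_smul, hA]

end Centering

end Matrix

theorem stmt1_general (N : ℕ)
    (A : Matrix (Fin N) (Fin N) ℝ)
    (hA_nonneg : ∀ i j, 0 ≤ A i j)
    (hA_row : ∀ i, ∑ j, A i j = 1)
    (hA_col : ∀ j, ∑ i, A i j = 1)
    (hA_diag : ∀ i, 0 < A i i)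
    (hA_irred : ∀ i j, ∃ k : ℕ, 1 ≤ k ∧ 0 < (A ^ k) i j)
    (J : Matrix (Fin N) (Fin N) ℝ)
    (hJ : ∀ i j, J i j = 1 / N) :
    ‖A - J‖ < 1 := by
  have hA : A ∈ doublyStochastic ℝ (Fin N) :=
    mem_doublyStochastic_iff_sum.2 ⟨hA_nonneg, hA_row, hA_col⟩
  have hirr : A.IsIrreducible := (isIrreducible_iff_exists_pow_pos hA_nonneg).2 hA_irred
  have hJ' : ∀ i j, J i j = 1 / Fintype.card (Fin N) := by simpa using hJ
  refine l2_opNorm_lt_one_of_dotProduct_mulVec_lt fun x hx => ?_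
  rw [sub_mulVec_eq_mulVec_sub (mulVec_one_of_mem_doublyStochastic hA) hJ']
  by_cases hy : x - J *ᵥ x = 0
  · rw [hy, mulVec_zero, zero_dotProduct]
    exact (show 0 ≤ x ⬝ᵥ x from Fintype.sum_nonneg fun i => mul_self_nonneg (x i)).lt_of_ne
      (Ne.symm (dotProduct_self_eq_zero.not.2 hx))
  · exact (dotProduct_mulVec_self_lt hA hA_diag hirr (sum_sub_mulVec_eq_zero hJ' x) hy).trans_le
      (dotProduct_sub_mulVec_le hJ' x)

/-- If `A` is an `N × N` doubly stochastic matrix with nonnegative entries,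
strictly positive diagonal, and `A` is irreducible, then `‖A − J‖ < 1` in the spectral
norm, where `J = (1/N)·𝟙𝟙ᵀ`. -/
theorem stmt1 (N : ℕ) (hN : 1 ≤ N)
    (A : Matrix (Fin N) (Fin N) ℝ)
    (hA_nonneg : ∀ i j, 0 ≤ A i j)
    (hA_row : ∀ i, ∑ j, A i j = 1)
    (hA_col : ∀ j, ∑ i, A i j = 1)
    (hA_diag : ∀ i, 0 < A i i)
    (hA_irred : ∀ i j, ∃ k : ℕ, 1 ≤ k ∧ 0 < (A ^ k) i j)
    (J : Matrix (Fin N) (Fin N) ℝ)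
    (hJ : ∀ i j, J i j = 1 / N) :
    ‖A - J‖ < 1 :=
  stmt1_general N A hA_nonneg hA_row hA_col hA_diag hA_irred J hJ
end

section
/- Let N, n, r ≥ 1, let A be an N×N real matrix with nonnegative entries that is doubly stochastic (all row sums and all column sums equal 1), set L = I_N − A, κ := ‖A − J‖ (spectral norm) with J = (1/N)·𝟙𝟙ᵀ. Let g₁, …, g_N : ℝⁿ → ℝʳ each be l₃-Lipschitz. Let x, x⁺ ∈ (ℝⁿ)^N and χ, e ∈ (ℝʳ)^N, and define χ⁺ ∈ (ℝʳ)^N by χ⁺ᵢ := Σⱼ L_{ij}·eⱼ + gᵢ(x⁺ᵢ) − gᵢ(xᵢ) + Σⱼ A_{ij}·χⱼ. Writing χ̄⁺ := (1/N)Σᵢ χ⁺ᵢ and χ̄ := (1/N)Σᵢ χᵢ, one has ‖χ⁺ − 𝟙_N ⊗ χ̄⁺‖ ≤ κ·‖χ − 𝟙_N ⊗ χ̄‖ + 2‖e‖ + l₃·‖x⁺ − x‖, where block tuples carry the Euclidean norm ‖v‖ = (Σᵢ‖vᵢ‖²)^{1/2} and 𝟙_N ⊗ χ̄ denotes the N-tuple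 with every block equal to χ̄. -/
/-!
Writing `Δᵢ = gᵢ(x⁺ᵢ) − gᵢ(xᵢ)`, the disagreement of `χ⁺` splits as
`(I − A) e + (Δ − 𝟙 ⊗ Δ̄) + (A − J)(χ − 𝟙 ⊗ χ̄)`: column sums `1` make `A` preserve the block sum,
and row sums `1` make it fix consensus vectors. The first term is at most `2‖e‖` because a doubly
stochastic matrix has spectral norm at most `1`; removing the mean is an orthogonal projection,
so the second is at most `‖Δ‖ ≤ l₃‖x⁺ − x‖`; the third is at most `κ‖χ − 𝟙 ⊗ χ̄‖`.
-/

open Matrix Finset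
open scoped Matrix.Norms.L2Operator

section Blocks

variable {ι E : Type*} [Fintype ι]

section Algebra

variable [SeminormedAddCommGroup E] [NormedSpace ℝ E]

-- The action of `M ⊗ I` on block vectors.
noncomputable def blockMulVec (M : Matrix ι ι ℝ) (v : PiLp 2 (fun _ : ι => E)) :
    PiLp 2 (fun _ : ι => E) :=
  WithLp.toLp 2 fun i => ∑ j, M i j • v j

noncomputable def blockMean (v : PiLp 2 (fun _ : ι => E)) : E :=
  (Fintype.card ι : ℝ)⁻¹ • ∑ i, v i

noncomputable def consensusError (v : PiLp 2 (fun _ : ι => E)) : PiLp 2 (fun _ : ι => E) :=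
  v - WithLp.toLp 2 fun _ => blockMean v

variable (ι) in
noncomputable def averagingMatrix : Matrix ι ι ℝ :=
  Matrix.of fun _ _ => (Fintype.card ι : ℝ)⁻¹

@[simp]
lemma blockMulVec_apply (M : Matrix ι ι ℝ) (v : PiLp 2 (fun _ : ι => E)) (i : ι) :
    blockMulVec M v i = ∑ j, M i j • v j :=
  rfl

lemma blockMulVec_one [DecidableEq ι] (v : PiLp 2 (fun _ : ι => E)) : blockMulVec 1 v = v := by
  ext1 i
  simp [Matrix.one_apply, ite_smul]

lemma blockMulVec_sub_left (M M' : Matrix ι ι ℝ) (v : PiLp 2 (fun _ : ι => E)) :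
    blockMulVec (M - M') v = blockMulVec M v - blockMulVec M' v := by
  ext1 i
  simp [sub_smul]

lemma blockMulVec_sub_right (M : Matrix ι ι ℝ) (v w : PiLp 2 (fun _ : ι => E)) :
    blockMulVec M (v - w) = blockMulVec M v - blockMulVec M w := by
  ext1 i
  simp [smul_sub]

lemma blockMulVec_const {M : Matrix ι ι ℝ} (hrow : ∀ i, ∑ j, M i j = 1) (c : E) :
    blockMulVec M (WithLp.toLp 2 fun _ => c) = WithLp.toLp 2 fun _ => c := by
  ext1 i
  simp [← sum_smul, hrow]

lemma sum_blockMulVec {M : Matrix ι ι ℝ} (hcol : ∀ j, ∑ i, M i j = 1)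
    (v : PiLp 2 (fun _ : ι => E)) : ∑ i, blockMulVec M v i = ∑ i, v i := by
  simp only [blockMulVec_apply]
  rw [sum_comm]
  simp [← sum_smul, hcol]

lemma averagingMatrix_blockMulVec (v : PiLp 2 (fun _ : ι => E)) :
    blockMulVec (averagingMatrix ι) v = WithLp.toLp 2 fun _ => blockMean v := by
  ext1 i
  simp [averagingMatrix, blockMean, smul_sum]

lemma blockMean_const [Nonempty ι] (c : E) : blockMean (WithLp.toLp 2 fun _ : ι => c) = c := by
  simp [blockMean, ← Nat.cast_smul_eq_nsmul ℝ, smul_smul]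

lemma sum_consensusError (v : PiLp 2 (fun _ : ι => E)) : ∑ i, consensusError v i = 0 := by
  rcases isEmpty_or_nonempty ι with hι | hι
  · simp
  · simp [consensusError, blockMean, ← Nat.cast_smul_eq_nsmul ℝ, smul_smul]

lemma consensusError_add (v w : PiLp 2 (fun _ : ι => E)) :
    consensusError (v + w) = consensusError v + consensusError w := by
  ext1 i
  simp [consensusError, blockMean, sum_add_distrib]
  abel

lemma consensusError_eq_self {v : PiLp 2 (fun _ : ι => E)} (hv : ∑ i, v i = 0) :
    consensusError v = v := by
  ext1 i
  simp [consensusError, blockMean, hv]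

lemma consensusError_blockMulVec [Nonempty ι] {M : Matrix ι ι ℝ}
    (hrow : ∀ i, ∑ j, M i j = 1) (hcol : ∀ j, ∑ i, M i j = 1) (v : PiLp 2 (fun _ : ι => E)) :
    consensusError (blockMulVec M v) = blockMulVec (M - averagingMatrix ι) (consensusError v) := by
  unfold consensusError
  rw [blockMulVec_sub_left, blockMulVec_sub_right, blockMulVec_sub_right,
    blockMulVec_const hrow, averagingMatrix_blockMulVec, averagingMatrix_blockMulVec,
    blockMean_const, blockMean, blockMean, sum_blockMulVec hcol]
  abel

lemma consensusError_tracking_update [DecidableEq ι] [Nonempty ι] {A : Matrix ι ι ℝ}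
    (hrow : ∀ i, ∑ j, A i j = 1) (hcol : ∀ j, ∑ i, A i j = 1) (e Δ χ : PiLp 2 (fun _ : ι => E)) :
    consensusError (blockMulVec (1 - A) e + Δ + blockMulVec A χ) =
      blockMulVec (1 - A) e + consensusError Δ +
        blockMulVec (A - averagingMatrix ι) (consensusError χ) := by
  have hsum_zero : ∑ i, blockMulVec (1 - A) e i = 0 := by
    simp only [blockMulVec_sub_left, blockMulVec_one, PiLp.sub_apply, sum_sub_distrib,
      sum_blockMulVec hcol, sub_self]
  rw [consensusError_add, consensusError_add, consensusError_eq_self hsum_zero,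
    consensusError_blockMulVec hrow hcol]

end Algebra

lemma norm_consensusError_le [NormedAddCommGroup E] [InnerProductSpace ℝ E]
    (v : PiLp 2 (fun _ : ι => E)) : ‖consensusError v‖ ≤ ‖v‖ := by
  set c : PiLp 2 (fun _ : ι => E) := WithLp.toLp 2 fun _ => blockMean v
  have horth : inner ℝ (consensusError v) c = 0 := by
    simp only [PiLp.inner_apply, c, ← sum_inner, sum_consensusError, inner_zero_left]
  have hpyth := norm_add_sq_eq_norm_sq_add_norm_sq_real horth
  rw [show consensusError v + c = v from sub_add_cancel _ _] at hpyth
  refine (mul_self_le_mul_self_iff (norm_nonneg _) (norm_nonneg _)).2 ?_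
  rw [hpyth]
  exact le_add_of_nonneg_right (mul_self_nonneg _)

end Blocks

lemma PiLp.norm_le_mul_norm_of_forall_le {ι : Type*} [Fintype ι] {β γ : ι → Type*}
    [∀ i, SeminormedAddCommGroup (β i)] [∀ i, SeminormedAddCommGroup (γ i)]
    {u : PiLp 2 β} {w : PiLp 2 γ} {c : ℝ} (hc : 0 ≤ c) (h : ∀ i, ‖u i‖ ≤ c * ‖w i‖) :
    ‖u‖ ≤ c * ‖w‖ := by
  refine (sq_le_sq₀ (norm_nonneg _) (by positivity)).1 ?_
  rw [PiLp.norm_sq_eq_of_L2, mul_pow, PiLp.norm_sq_eq_of_L2, mul_sum]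
  gcongr with i
  rw [← mul_pow]
  gcongr
  exact h i

lemma norm_sq_eq_sum_norm_sq_column {ι κ : Type*} [Fintype ι] [Fintype κ]
    (v : PiLp 2 (fun _ : ι => EuclideanSpace ℝ κ)) :
    ‖v‖ ^ 2 = ∑ k, ‖(WithLp.toLp 2 fun i => v i k : EuclideanSpace ℝ ι)‖ ^ 2 := by
  simp only [PiLp.norm_sq_eq_of_L2]
  exact sum_comm

lemma norm_blockMulVec_le {ι κ : Type*} [Fintype ι] [DecidableEq ι] [Fintype κ]
    (M : Matrix ι ι ℝ) (v : PiLp 2 (fun _ : ι => EuclideanSpace ℝ κ)) :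
    ‖blockMulVec M v‖ ≤ ‖M‖ * ‖v‖ := by
  refine (sq_le_sq₀ (norm_nonneg _) (by positivity)).1 ?_
  rw [norm_sq_eq_sum_norm_sq_column, mul_pow, norm_sq_eq_sum_norm_sq_column, mul_sum]
  gcongr with k
  set column : EuclideanSpace ℝ ι := WithLp.toLp 2 fun j => v j k
  have hcol : (WithLp.toLp 2 fun i => blockMulVec M v i k : EuclideanSpace ℝ ι) =
      (EuclideanSpace.equiv ι ℝ).symm (M *ᵥ column) := by
    ext i
    simp [column, mulVec, dotProduct]
  rw [hcol, ← mul_pow]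
  exact pow_le_pow_left₀ (norm_nonneg _) (M.l2_opNorm_mulVec column) 2

lemma norm_blockMulVec_one_sub_le {ι κ : Type*} [Fintype ι] [DecidableEq ι] [Fintype κ]
    {A : Matrix ι ι ℝ} (hA : A ∈ doublyStochastic ℝ ι)
    (e : PiLp 2 (fun _ : ι => EuclideanSpace ℝ κ)) :
    ‖blockMulVec (1 - A) e‖ ≤ 2 * ‖e‖ :=
  calc ‖blockMulVec (1 - A) e‖ ≤ ‖e‖ + ‖A‖ * ‖e‖ := by
        rw [blockMulVec_sub_left, blockMulVec_one]
        exact norm_sub_le_of_le le_rfl (norm_blockMulVec_le A e)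
    _ ≤ ‖e‖ + 1 * ‖e‖ := by
        gcongr
        exact l2_opNorm_le_one_of_mem_doublyStochastic hA
    _ = 2 * ‖e‖ := by ring

theorem stmt9_general (N n r : ℕ) (hN : 1 ≤ N)
    (A : Matrix (Fin N) (Fin N) ℝ)
    (hA_nonneg : ∀ i j, 0 ≤ A i j)
    (hA_row : ∀ i, ∑ j, A i j = 1)
    (hA_col : ∀ j, ∑ i, A i j = 1)
    (L : Matrix (Fin N) (Fin N) ℝ) (hL : L = 1 - A)
    (J : Matrix (Fin N) (Fin N) ℝ) (hJ : ∀ i j, J i j = 1 / N)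
    (κ : ℝ) (hκ : κ = ‖A - J‖)
    (l₃ : ℝ) (hl₃ : 0 < l₃)
    (g : Fin N → EuclideanSpace ℝ (Fin n) → EuclideanSpace ℝ (Fin r))
    (hg_lip : ∀ i, ∀ u v, ‖g i u - g i v‖ ≤ l₃ * ‖u - v‖)
    (x xplus : PiLp 2 (fun _ : Fin N => EuclideanSpace ℝ (Fin n)))
    (χ e χplus : PiLp 2 (fun _ : Fin N => EuclideanSpace ℝ (Fin r)))
    (hχplus : ∀ i, χplus i =
      (∑ j, L i j • e j) + g i (xplus i) - g i (x i) + ∑ j, A i j • χ j)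
    (χbar χbarplus : EuclideanSpace ℝ (Fin r))
    (hχbar : χbar = ((N : ℝ)⁻¹) • ∑ i, χ i)
    (hχbarplus : χbarplus = ((N : ℝ)⁻¹) • ∑ i, χplus i) :
    ‖χplus - (show PiLp 2 (fun _ : Fin N => EuclideanSpace ℝ (Fin r)) from WithLp.toLp 2 (fun _ => χbarplus))‖
      ≤ κ * ‖χ - (show PiLp 2 (fun _ : Fin N => EuclideanSpace ℝ (Fin r)) from WithLp.toLp 2 (fun _ => χbar))‖
        + 2 * ‖e‖ + l₃ * ‖xplus - x‖ := by
  have : Nonempty (Fin N) := ⟨⟨0, hN⟩⟩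
  have hJ_avg : J = averagingMatrix (Fin N) := by
    ext i j
    simp [hJ, averagingMatrix]
  subst hL hJ_avg hκ
  have hmean (v : PiLp 2 (fun _ : Fin N => EuclideanSpace ℝ (Fin r))) :
      (N : ℝ)⁻¹ • ∑ i, v i = blockMean v := by
    simp [blockMean]
  set Δ : PiLp 2 (fun _ : Fin N => EuclideanSpace ℝ (Fin r)) :=
    WithLp.toLp 2 fun i => g i (xplus i) - g i (x i)
  have hstep : χplus = blockMulVec (1 - A) e + Δ + blockMulVec A χ := by
    ext1 i
    simp only [hχplus, PiLp.add_apply, blockMulVec_apply, Δ]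
    abel
  have hχplus_dev : χplus - (WithLp.toLp 2 fun _ => χbarplus) = consensusError χplus := by
    rw [hχbarplus, hmean]
    rfl
  have hχ_dev : χ - (WithLp.toLp 2 fun _ => χbar) = consensusError χ := by
    rw [hχbar, hmean]
    rfl
  have hΔ : ‖consensusError Δ‖ ≤ l₃ * ‖xplus - x‖ :=
    (norm_consensusError_le Δ).trans
      (PiLp.norm_le_mul_norm_of_forall_le hl₃.le fun i => hg_lip i _ _)
  rw [hχplus_dev, hχ_dev, hstep, consensusError_tracking_update hA_row hA_col]
  linarith [norm_add₃_le (a := blockMulVec (1 - A) e) (b := consensusError Δ)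
      (c := blockMulVec (A - averagingMatrix (Fin N)) (consensusError χ)),
    norm_blockMulVec_one_sub_le (mem_doublyStochastic_iff_sum.2 ⟨hA_nonneg, hA_row, hA_col⟩) e,
    norm_blockMulVec_le (A - averagingMatrix (Fin N)) (consensusError χ)]

/-- one-step consensus-error bound for the aggregative-variable tracker.
With `A` doubly stochastic nonnegative, `L = I − A`, `κ = ‖A − J‖` (spectral norm),
`gᵢ` each `l₃`-Lipschitz and `χ⁺ᵢ = Σⱼ L_{ij} eⱼ + gᵢ(x⁺ᵢ) − gᵢ(xᵢ) + Σⱼ A_{ij} χⱼ`, one has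
`‖χ⁺ − 𝟙⊗χ̄⁺‖ ≤ κ‖χ − 𝟙⊗χ̄‖ + 2‖e‖ + l₃‖x⁺ − x‖`. -/
theorem stmt9 (N n r : ℕ) (hN : 1 ≤ N) (hn : 1 ≤ n) (hr : 1 ≤ r)
    (A : Matrix (Fin N) (Fin N) ℝ)
    (hA_nonneg : ∀ i j, 0 ≤ A i j)
    (hA_row : ∀ i, ∑ j, A i j = 1)
    (hA_col : ∀ j, ∑ i, A i j = 1)
    (L : Matrix (Fin N) (Fin N) ℝ) (hL : L = 1 - A)
    (J : Matrix (Fin N) (Fin N) ℝ) (hJ : ∀ i j, J i j = 1 / N)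
    (κ : ℝ) (hκ : κ = ‖A - J‖)
    (l₃ : ℝ) (hl₃ : 0 < l₃)
    (g : Fin N → EuclideanSpace ℝ (Fin n) → EuclideanSpace ℝ (Fin r))
    (hg_lip : ∀ i, ∀ u v, ‖g i u - g i v‖ ≤ l₃ * ‖u - v‖)
    (x xplus : PiLp 2 (fun _ : Fin N => EuclideanSpace ℝ (Fin n)))
    (χ e χplus : PiLp 2 (fun _ : Fin N => EuclideanSpace ℝ (Fin r)))
    (hχplus : ∀ i, χplus i =
      (∑ j, L i j • e j) + g i (xplus i) - g i (x i) + ∑ j, A i j • χ j)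
    (χbar χbarplus : EuclideanSpace ℝ (Fin r))
    (hχbar : χbar = ((N : ℝ)⁻¹) • ∑ i, χ i)
    (hχbarplus : χbarplus = ((N : ℝ)⁻¹) • ∑ i, χplus i) :
    ‖χplus - (show PiLp 2 (fun _ : Fin N => EuclideanSpace ℝ (Fin r)) from WithLp.toLp 2 (fun _ => χbarplus))‖
      ≤ κ * ‖χ - (show PiLp 2 (fun _ : Fin N => EuclideanSpace ℝ (Fin r)) from WithLp.toLp 2 (fun _ => χbar))‖
        + 2 * ‖e‖ + l₃ * ‖xplus - x‖ :=
  stmt9_general N n r hN A hA_nonneg hA_row hA_col L hL J hJ κ hκ l₃ hl₃ g hg_lip x xplus χ e χplus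
    hχplus χbar χbarplus hχbar hχbarplus
end

section
/- Let H be a nonzero 3×3 real matrix, let ρ(H) denote its spectral radius (the maximum absolute value of its complex eigenvalues), and let ‖·‖ denote the spectral norm. Then for every ε with 0 < ε < 2‖H‖ and every k ∈ ℕ: ‖H^k‖ ≤ c₃·(ρ(H) + ε)^k, where c₃ = 3√3 · max{ 4‖H‖²/ε² , ε²/(4‖H‖²) }. -/
open Matrix
open scoped Matrix.Norms.L2Operator
open WithLp Polynomial

/-!
Over `ℂ` the characteristic polynomial of `H` factors as `(X - a)(X - b)(X - c)` with
`|a|, |b|, |c| ≤ ρ(H)`, so by Cayley–Hamilton `H ^ k` equals its Newton interpolant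
`a ^ k + [a, b]ₖ (H - a) + [a, b, c]ₖ (H - a)(H - b)`, where `[⋯]ₖ` are the divided differences
of `z ↦ z ^ k`. Their recursions give `ε |[a, b]ₖ| ≤ (ρ + ε) ^ k` and
`ε ^ 2 |[a, b, c]ₖ| ≤ (ρ + ε) ^ k`, and `‖H - a‖ ≤ 2 ‖H‖`, whence
`‖H ^ k‖ ≤ 3 (2 ‖H‖ / ε) ^ 2 (ρ + ε) ^ k ≤ c₃ (ρ + ε) ^ k`.
Complexifying a real matrix does not change its spectral norm.
-/

lemma EuclideanSpace.norm_sq_eq_re_add_im {n : Type*} [Fintype n] (z : EuclideanSpace ℂ n) :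
    ‖z‖ ^ 2 = ‖toLp 2 fun i => (z i).re‖ ^ 2 + ‖toLp 2 fun i => (z i).im‖ ^ 2 := by
  simp only [EuclideanSpace.norm_sq_eq, Complex.sq_norm, Complex.normSq_apply,
    Real.norm_eq_abs, sq_abs, ← Finset.sum_add_distrib, ← sq]

namespace Matrix
variable {m n : Type*} [Fintype n]

lemma re_map_ofReal_mulVec (H : Matrix m n ℝ) (z : n → ℂ) (i : m) :
    ((H.map (algebraMap ℝ ℂ) *ᵥ z) i).re = (H *ᵥ fun j => (z j).re) i := by
  simp [mulVec, dotProduct, Complex.re_sum]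

lemma im_map_ofReal_mulVec (H : Matrix m n ℝ) (z : n → ℂ) (i : m) :
    ((H.map (algebraMap ℝ ℂ) *ᵥ z) i).im = (H *ᵥ fun j => (z j).im) i := by
  simp [mulVec, dotProduct, Complex.im_sum]

variable [Fintype m] [DecidableEq n]

lemma l2_opNorm_map_ofReal (H : Matrix m n ℝ) : ‖H.map (algebraMap ℝ ℂ)‖ = ‖H‖ := by
  set A := H.map (algebraMap ℝ ℂ)
  apply le_antisymm
  · refine ContinuousLinearMap.opNorm_le_bound _ (norm_nonneg H) fun z => ?_
    refine le_of_pow_le_pow_left₀ two_ne_zero (by positivity) ?_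
    have hre := l2_opNorm_mulVec H (toLp 2 fun j => (z j).re)
    have him := l2_opNorm_mulVec H (toLp 2 fun j => (z j).im)
    calc ‖(toLp 2 (A *ᵥ z) : EuclideanSpace ℂ m)‖ ^ 2
        = ‖(toLp 2 (H *ᵥ fun j => (z j).re) : EuclideanSpace ℝ m)‖ ^ 2
          + ‖(toLp 2 (H *ᵥ fun j => (z j).im) : EuclideanSpace ℝ m)‖ ^ 2 := by
          simp only [EuclideanSpace.norm_sq_eq_re_add_im, re_map_ofReal_mulVec,
            im_map_ofReal_mulVec, A]
      _ ≤ (‖H‖ * ‖(toLp 2 fun j => (z j).re : EuclideanSpace ℝ n)‖) ^ 2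
          + (‖H‖ * ‖(toLp 2 fun j => (z j).im : EuclideanSpace ℝ n)‖) ^ 2 := by
          gcongr
          exacts [hre, him]
      _ = (‖H‖ * ‖z‖) ^ 2 := by
          rw [mul_pow, mul_pow, mul_pow, EuclideanSpace.norm_sq_eq_re_add_im z]; ring
  · refine ContinuousLinearMap.opNorm_le_bound _ (norm_nonneg A) fun x => ?_
    have hz : ‖(toLp 2 fun j => (x j : ℂ) : EuclideanSpace ℂ n)‖ = ‖x‖ := by
      simp [EuclideanSpace.norm_eq]
    have hA := l2_opNorm_mulVec A (toLp 2 fun j => (x j : ℂ))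
    rw [hz] at hA
    refine le_of_eq_of_le ?_ hA
    simp only [EuclideanSpace.norm_eq]
    congr 1
    refine Finset.sum_congr rfl fun i _ => ?_
    change ‖(H *ᵥ x) i‖ ^ 2 = ‖(A *ᵥ algebraMap ℝ ℂ ∘ x) i‖ ^ 2
    rw [← RingHom.map_mulVec, Complex.coe_algebraMap, Complex.norm_real]

end Matrix

lemma Matrix.exists_charpoly_eq_of_card_eq_three {K n : Type*} [Field K] [IsAlgClosed K]
    [Fintype n] [DecidableEq n] (hn : Fintype.card n = 3) (A : Matrix n n K) :
    ∃ a b c : K, A.charpoly = (X - C a) * (X - C b) * (X - C c) := by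
  have hcard : A.charpoly.roots.card = 3 := by
    rw [IsAlgClosed.card_roots_eq_natDegree, charpoly_natDegree_eq_dim, hn]
  obtain ⟨a, b, c, habc⟩ := Multiset.card_eq_three.mp hcard
  refine ⟨a, b, c, ?_⟩
  rw [← prod_multiset_X_sub_C_of_monic_of_roots_card_eq A.charpoly_monic
    (IsAlgClosed.card_roots_eq_natDegree), habc]
  simp [mul_assoc]

lemma spectrum.toReal_spectralRadius_le_norm {𝕜 A : Type*} [NormedField 𝕜] [NormedRing A]
    [NormedAlgebra 𝕜 A] [NormOneClass A] [CompleteSpace A] (a : A) :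
    (spectralRadius 𝕜 a).toReal ≤ ‖a‖ := by
  simpa using
    ENNReal.toReal_mono ENNReal.coe_ne_top (spectrum.spectralRadius_le_nnnorm (𝕜 := 𝕜) a)

lemma spectrum.norm_le_toReal_spectralRadius {𝕜 A : Type*} [NormedField 𝕜] [NormedRing A]
    [NormedAlgebra 𝕜 A] [NormOneClass A] [CompleteSpace A] {a : A} {z : 𝕜}
    (hz : z ∈ spectrum 𝕜 a) : ‖z‖ ≤ (spectralRadius 𝕜 a).toReal := by
  have hfin : spectralRadius 𝕜 a ≠ ⊤ :=
    ne_top_of_le_ne_top ENNReal.coe_ne_top (spectrum.spectralRadius_le_nnnorm a)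
  simpa using ENNReal.toReal_mono hfin
    (le_iSup₂ (f := fun w (_ : w ∈ spectrum 𝕜 a) => (‖w‖₊ : ENNReal)) z hz)

section DividedDifferences

variable {R : Type*} [CommRing R]

/-- The divided difference `[a, b]` of `z ↦ z ^ k`, i.e. `∑_{i + j = k - 1} a ^ i b ^ j`. -/
def powDivDiff₁ (a b : R) : ℕ → R
  | 0 => 0
  | k + 1 => a ^ k + b * powDivDiff₁ a b k

/-- The divided difference `[a, b, c]` of `z ↦ z ^ k`. -/
def powDivDiff₂ (a b c : R) : ℕ → R
  | 0 => 0
  | k + 1 => powDivDiff₁ a b k + c * powDivDiff₂ a b c k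

lemma exists_X_pow_eq_newton (a b c : R) (k : ℕ) :
    ∃ q : R[X], X ^ k = C (a ^ k) + C (powDivDiff₁ a b k) * (X - C a)
      + C (powDivDiff₂ a b c k) * ((X - C a) * (X - C b))
      + (X - C a) * (X - C b) * (X - C c) * q := by
  induction k with
  | zero => exact ⟨0, by simp [powDivDiff₁, powDivDiff₂]⟩
  | succ k ih =>
    obtain ⟨q, hq⟩ := ih
    refine ⟨C (powDivDiff₂ a b c k) + X * q, ?_⟩
    rw [pow_succ, hq]
    simp only [powDivDiff₁, powDivDiff₂, map_add, map_mul, map_pow]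
    ring

lemma pow_eq_newton_of_aeval_eq_zero {A : Type*} [Ring A] [Algebra R A] {x : A} {a b c : R}
    (hx : aeval x ((X - C a) * (X - C b) * (X - C c)) = 0) (k : ℕ) :
    x ^ k = algebraMap R A (a ^ k) + powDivDiff₁ a b k • (x - algebraMap R A a)
      + powDivDiff₂ a b c k • ((x - algebraMap R A a) * (x - algebraMap R A b)) := by
  obtain ⟨q, hq⟩ := exists_X_pow_eq_newton a b c k
  have h := congrArg (aeval x) hq
  simp only [map_add, map_mul, map_pow, map_sub, aeval_X, aeval_C] at h hx
  rw [h, hx, zero_mul, add_zero, map_pow, Algebra.smul_def, Algebra.smul_def]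

end DividedDifferences

section Bounds

variable {𝕜 : Type*} [NormedField 𝕜] {a b c : 𝕜} {r ε : ℝ}

lemma norm_powDivDiff₁_le (ha : ‖a‖ ≤ r) (hb : ‖b‖ ≤ r) (hε : 0 ≤ ε) (k : ℕ) :
    ε * ‖powDivDiff₁ a b k‖ ≤ (r + ε) ^ k := by
  induction k with
  | zero => simp [powDivDiff₁]
  | succ k ih =>
    have hak : ‖a‖ ^ k ≤ (r + ε) ^ k := by gcongr; linarith
    have hr : 0 ≤ r := (norm_nonneg a).trans ha
    calc ε * ‖powDivDiff₁ a b (k + 1)‖ ≤ ε * ‖a‖ ^ k + ‖b‖ * (ε * ‖powDivDiff₁ a b k‖) := by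
          rw [powDivDiff₁, ← norm_pow, mul_left_comm, ← norm_mul, ← mul_add]
          gcongr
          exact norm_add_le _ _
      _ ≤ ε * (r + ε) ^ k + r * (r + ε) ^ k := by gcongr
      _ = (r + ε) ^ (k + 1) := by ring

lemma norm_powDivDiff₂_le (ha : ‖a‖ ≤ r) (hb : ‖b‖ ≤ r) (hc : ‖c‖ ≤ r) (hε : 0 ≤ ε) (k : ℕ) :
    ε ^ 2 * ‖powDivDiff₂ a b c k‖ ≤ (r + ε) ^ k := by
  induction k with
  | zero => simp [powDivDiff₂]
  | succ k ih =>
    have hr : 0 ≤ r := (norm_nonneg a).trans ha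
    calc ε ^ 2 * ‖powDivDiff₂ a b c (k + 1)‖
        ≤ ε * (ε * ‖powDivDiff₁ a b k‖) + ‖c‖ * (ε ^ 2 * ‖powDivDiff₂ a b c k‖) := by
          rw [powDivDiff₂, ← mul_assoc, ← sq, mul_left_comm, ← norm_mul, ← mul_add]
          gcongr
          exact norm_add_le _ _
      _ ≤ ε * (r + ε) ^ k + r * (r + ε) ^ k := by
          gcongr
          exact norm_powDivDiff₁_le ha hb hε k
      _ = (r + ε) ^ (k + 1) := by ring

end Bounds

theorem norm_pow_le_of_aeval_eq_zero {𝕜 A : Type*} [NormedField 𝕜] [NormedRing A]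
    [NormedAlgebra 𝕜 A] [NormOneClass A] {x : A} {a b c : 𝕜}
    (hx : aeval x ((X - C a) * (X - C b) * (X - C c)) = 0) {r M ε : ℝ}
    (ha : ‖a‖ ≤ r) (hb : ‖b‖ ≤ r) (hc : ‖c‖ ≤ r) (hxM : ‖x‖ ≤ M) (hrM : r ≤ M)
    (hε : 0 < ε) (hεM : ε ≤ 2 * M) (k : ℕ) :
    ‖x ^ k‖ ≤ 3 * (2 * M / ε) ^ 2 * (r + ε) ^ k := by
  set t := 2 * M / ε
  have ht : 1 ≤ t := (one_le_div hε).mpr hεM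
  have hsub : ∀ z : 𝕜, ‖z‖ ≤ r → ‖x - algebraMap 𝕜 A z‖ ≤ t * ε := fun z hz => by
    rw [div_mul_cancel₀ _ hε.ne']
    calc ‖x - algebraMap 𝕜 A z‖ ≤ ‖x‖ + ‖z‖ := by
          simpa only [norm_algebraMap'] using norm_sub_le x (algebraMap 𝕜 A z)
      _ ≤ 2 * M := by linarith
  have h₀ : ‖a ^ k‖ ≤ (r + ε) ^ k := by
    rw [norm_pow]; gcongr; linarith
  have h₁ := norm_powDivDiff₁_le ha hb hε.le k
  have h₂ := norm_powDivDiff₂_le ha hb hc hε.le k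
  rw [pow_eq_newton_of_aeval_eq_zero hx k]
  calc _ ≤ ‖a ^ k‖ + ‖powDivDiff₁ a b k‖ * (t * ε)
        + ‖powDivDiff₂ a b c k‖ * ((t * ε) * (t * ε)) := by
        refine (norm_add₃_le).trans ?_
        rw [norm_algebraMap', norm_smul, norm_smul]
        gcongr
        · exact hsub a ha
        · exact (norm_mul_le _ _).trans
            (mul_le_mul (hsub a ha) (hsub b hb) (norm_nonneg _) (by positivity))
    _ = ‖a ^ k‖ + t * (ε * ‖powDivDiff₁ a b k‖)
          + t ^ 2 * (ε ^ 2 * ‖powDivDiff₂ a b c k‖) := by ring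
    _ ≤ (r + ε) ^ k + t * (r + ε) ^ k + t ^ 2 * (r + ε) ^ k := by gcongr
    _ ≤ 3 * t ^ 2 * (r + ε) ^ k := by
        have hP : 0 ≤ (r + ε) ^ k := by have := (norm_nonneg a).trans ha; positivity
        have h1 : 1 ≤ t ^ 2 := one_le_pow₀ ht
        have h2 : t ≤ t ^ 2 := by nlinarith
        linarith [mul_le_mul_of_nonneg_right h1 hP, mul_le_mul_of_nonneg_right h2 hP]

theorem stmt13_general (H : Matrix (Fin 3) (Fin 3) ℝ)
    (ρ : ℝ) (hρ : ρ = (spectralRadius ℂ (H.map (algebraMap ℝ ℂ))).toReal)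
    (ε : ℝ) (hε0 : 0 < ε) (hε : ε < 2 * ‖H‖)
    (c₃ : ℝ)
    (hc₃ : c₃ = 3 * Real.sqrt 3 *
      max (4 * ‖H‖ ^ 2 / ε ^ 2) (ε ^ 2 / (4 * ‖H‖ ^ 2))) :
    ∀ k : ℕ, ‖H ^ k‖ ≤ c₃ * (ρ + ε) ^ k := by
  intro k
  set A := H.map (algebraMap ℝ ℂ)
  have hA : ‖A‖ = ‖H‖ := l2_opNorm_map_ofReal H
  obtain ⟨a, b, c, hchar⟩ := exists_charpoly_eq_of_card_eq_three (Fintype.card_fin 3) A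
  have hroot : ∀ z, A.charpoly.IsRoot z → ‖z‖ ≤ ρ := fun z hz =>
    hρ ▸ spectrum.norm_le_toReal_spectralRadius (mem_spectrum_of_isRoot_charpoly hz)
  have hρH : ρ ≤ ‖H‖ := by
    rw [hρ, ← hA]
    exact spectrum.toReal_spectralRadius_le_norm A
  have hpow : ‖A ^ k‖ ≤ 3 * (2 * ‖H‖ / ε) ^ 2 * (ρ + ε) ^ k :=
    norm_pow_le_of_aeval_eq_zero (hchar ▸ aeval_self_charpoly A)
      (hroot a (by simp [hchar])) (hroot b (by simp [hchar])) (hroot c (by simp [hchar]))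
      hA.le hρH hε0 hε.le k
  have hc : 3 * (2 * ‖H‖ / ε) ^ 2 ≤ c₃ :=
    calc 3 * (2 * ‖H‖ / ε) ^ 2 = 3 * 1 * (4 * ‖H‖ ^ 2 / ε ^ 2) := by ring
      _ ≤ c₃ := by
        rw [hc₃]
        gcongr
        · exact Real.one_le_sqrt.mpr (by norm_num)
        · exact le_max_left _ _
  have hρ0 : 0 ≤ ρ := hρ ▸ ENNReal.toReal_nonneg
  rw [← l2_opNorm_map_ofReal, Matrix.map_pow]
  exact hpow.trans (by gcongr)

/-- for a nonzero 3×3 real matrix `H` with spectral radius `ρ(H)` and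
spectral norm `‖·‖`, for every `0 < ε < 2‖H‖` and every `k`,
`‖H^k‖ ≤ c₃ (ρ(H) + ε)^k` with `c₃ = 3√3·max{4‖H‖²/ε², ε²/(4‖H‖²)}`. -/
theorem stmt13 (H : Matrix (Fin 3) (Fin 3) ℝ) (hH : H ≠ 0)
    (ρ : ℝ) (hρ : ρ = (spectralRadius ℂ (H.map (algebraMap ℝ ℂ))).toReal)
    (ε : ℝ) (hε0 : 0 < ε) (hε : ε < 2 * ‖H‖)
    (c₃ : ℝ)
    (hc₃ : c₃ = 3 * Real.sqrt 3 *
      max (4 * ‖H‖ ^ 2 / ε ^ 2) (ε ^ 2 / (4 * ‖H‖ ^ 2))) :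
    ∀ k : ℕ, ‖H ^ k‖ ≤ c₃ * (ρ + ε) ^ k :=
  stmt13_general H ρ hρ ε hε0 hε c₃ hc₃
end

section
/- Let H be a 3×3 real matrix with nonnegative entries, and let Θ, E : ℕ → ℝ³ be sequences of entrywise-nonnegative vectors satisfying the componentwise inequality Θ(k+1) ≤ H·Θ(k) + E(k) for all k ∈ ℕ. Suppose there exist constants c₃ ≥ 1, C₁ ≥ 0 and rates 0 < γ̄ < γ such that ‖H^k‖ ≤ c₃·γ̄^k (spectral norm) and ‖E(k)‖ ≤ C₁·γ^k (Euclidean norm) for all k ∈ ℕ. Then for all k ∈ ℕ: ‖Θ(k)‖ ≤ ( c₃·‖Θ(0)‖ + c₃·C₁/(γ − γ̄) )·γ^k. -/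
open Matrix
open scoped Matrix.Norms.L2Operator

/-!
Since `H` is entrywise nonnegative, `v ↦ H v` preserves the componentwise order, so unrolling
the recursion dominates `Θ(k)` by `H^k Θ(0) + ∑_{j<k} H^(k-1-j) E(j)`; as `Θ(k) ≥ 0`, this
vector has the larger Euclidean norm. The operator-norm bounds turn its norm into
`c₃ γ̄^k ‖Θ(0)‖` plus the convolution `∑_{j<k} c₃ γ̄^(k-1-j) C₁ γ^j`, which the geometric sum
identity `∑_{j<k} γ̄^(k-1-j) γ^j (γ - γ̄) = γ^k - γ̄^k` bounds by `c₃ C₁ γ^k / (γ - γ̄)`.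
-/

open Finset

lemma Matrix.mulVec_mono_of_nonneg {m n R : Type*} [Semiring R] [PartialOrder R]
    [IsOrderedRing R] [Fintype n] {H : Matrix m n R} (hH : ∀ i j, 0 ≤ H i j) {u v : n → R}
    (huv : u ≤ v) : H *ᵥ u ≤ H *ᵥ v :=
  fun i => dotProduct_le_dotProduct_of_nonneg_left huv (hH i ·)

lemma EuclideanSpace.norm_le_norm_of_nonneg_of_le {n : Type*} [Fintype n]
    {x y : EuclideanSpace ℝ n} (hx : ∀ i, 0 ≤ x i) (hxy : ∀ i, x i ≤ y i) : ‖x‖ ≤ ‖y‖ := by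
  simp only [EuclideanSpace.norm_eq, Real.norm_eq_abs, sq_abs]
  gcongr with i
  exacts [hx i, hxy i]

section

variable {n : Type*} [Fintype n] [DecidableEq n]

lemma Matrix.mulVec_pow_mulVec_add_sum_add (H : Matrix n n ℝ) (x : n → ℝ) (e : ℕ → n → ℝ)
    (k : ℕ) :
    H *ᵥ (H ^ k *ᵥ x + ∑ j ∈ range k, H ^ (k - 1 - j) *ᵥ e j) + e k
      = H ^ (k + 1) *ᵥ x + ∑ j ∈ range (k + 1), H ^ (k + 1 - 1 - j) *ᵥ e j := by
  rw [sum_range_succ, Nat.add_sub_cancel, Nat.sub_self, pow_zero, one_mulVec, mulVec_add,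
    mulVec_sum, mulVec_mulVec, ← pow_succ', add_assoc]
  congr 2
  refine sum_congr rfl fun j hj => ?_
  rw [mulVec_mulVec, ← pow_succ']
  congr 2
  have := mem_range.mp hj
  omega

lemma Matrix.le_pow_mulVec_add_sum_of_le_mulVec_add {H : Matrix n n ℝ} (hH : ∀ i j, 0 ≤ H i j)
    {x e : ℕ → n → ℝ} (hrec : ∀ k, x (k + 1) ≤ H *ᵥ x k + e k) (k : ℕ) :
    x k ≤ H ^ k *ᵥ x 0 + ∑ j ∈ range k, H ^ (k - 1 - j) *ᵥ e j := by
  induction k with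
  | zero => simp
  | succ k ih =>
    calc x (k + 1) ≤ H *ᵥ x k + e k := hrec k
      _ ≤ H *ᵥ (H ^ k *ᵥ x 0 + ∑ j ∈ range k, H ^ (k - 1 - j) *ᵥ e j) + e k := by
        gcongr; exact mulVec_mono_of_nonneg hH ih
      _ = _ := mulVec_pow_mulVec_add_sum_add H (x 0) e k

lemma Matrix.l2_norm_pow_mulVec_add_sum_le (H : Matrix n n ℝ) (x : EuclideanSpace ℝ n)
    (e : ℕ → EuclideanSpace ℝ n) (k : ℕ) :
    ‖WithLp.toLp 2 (H ^ k *ᵥ x + ∑ j ∈ range k, H ^ (k - 1 - j) *ᵥ e j)‖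
      ≤ ‖H ^ k‖ * ‖x‖ + ∑ j ∈ range k, ‖H ^ (k - 1 - j)‖ * ‖e j‖ := by
  rw [WithLp.toLp_add, WithLp.toLp_sum]
  refine (norm_add_le _ _).trans (add_le_add (l2_opNorm_mulVec _ _) ?_)
  exact (norm_sum_le _ _).trans (sum_le_sum fun j _ => l2_opNorm_mulVec _ _)

end

lemma sum_range_pow_mul_pow_le_div {a b : ℝ} (ha : 0 ≤ a) (hab : a < b) (k : ℕ) :
    ∑ j ∈ range k, a ^ (k - 1 - j) * b ^ j ≤ b ^ k / (b - a) := by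
  rw [le_div_iff₀ (sub_pos.mpr hab)]
  have hgeom := geom_sum₂_mul b a k
  simp only [mul_comm (b ^ _)] at hgeom
  rw [hgeom]
  linarith [pow_nonneg ha k]

lemma sum_range_mul_le_of_le_geom {u v : ℕ → ℝ} {c C r s : ℝ} (hu : ∀ j, 0 ≤ u j)
    (hv : ∀ j, 0 ≤ v j) (hur : ∀ j, u j ≤ c * r ^ j) (hvs : ∀ j, v j ≤ C * s ^ j)
    (hr : 0 ≤ r) (hrs : r < s) (k : ℕ) :
    ∑ j ∈ range k, u (k - 1 - j) * v j ≤ c * C / (s - r) * s ^ k := by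
  have hc : 0 ≤ c := by simpa using (hu 0).trans (hur 0)
  have hC : 0 ≤ C := by simpa using (hv 0).trans (hvs 0)
  calc ∑ j ∈ range k, u (k - 1 - j) * v j
      ≤ ∑ j ∈ range k, c * r ^ (k - 1 - j) * (C * s ^ j) :=
        sum_le_sum fun j _ => mul_le_mul (hur _) (hvs j) (hv j) (by positivity)
    _ = c * C * ∑ j ∈ range k, r ^ (k - 1 - j) * s ^ j := by
        rw [mul_sum]; exact sum_congr rfl fun j _ => by ring
    _ ≤ c * C * (s ^ k / (s - r)) := by gcongr; exact sum_range_pow_mul_pow_le_div hr hrs k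
    _ = c * C / (s - r) * s ^ k := by ring

theorem stmt14_general (H : Matrix (Fin 3) (Fin 3) ℝ)
    (hH_nonneg : ∀ i j, 0 ≤ H i j)
    (Θ E : ℕ → EuclideanSpace ℝ (Fin 3))
    (hΘ_nonneg : ∀ k i, 0 ≤ Θ k i)
    (hrec : ∀ k i, Θ (k + 1) i ≤ (∑ j, H i j * Θ k j) + E k i)
    (c₃ C₁ γbar γ : ℝ)
    (hγbar : 0 < γbar) (hγ : γbar < γ)
    (hHk : ∀ k : ℕ, ‖H ^ k‖ ≤ c₃ * γbar ^ k)
    (hEk : ∀ k : ℕ, ‖E k‖ ≤ C₁ * γ ^ k) :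
    ∀ k : ℕ, ‖Θ k‖ ≤ (c₃ * ‖Θ 0‖ + c₃ * C₁ / (γ - γbar)) * γ ^ k := by
  intro k
  have hc₃ : 0 ≤ c₃ := by simpa using (norm_nonneg _).trans (hHk 0)
  have hdom := le_pow_mulVec_add_sum_of_le_mulVec_add hH_nonneg
    (x := fun k => Θ k) (e := fun k => E k) (fun k i => hrec k i) k
  calc ‖Θ k‖ ≤ ‖WithLp.toLp 2 (H ^ k *ᵥ Θ 0 + ∑ j ∈ range k, H ^ (k - 1 - j) *ᵥ E j)‖ :=
        EuclideanSpace.norm_le_norm_of_nonneg_of_le (hΘ_nonneg k) hdom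
    _ ≤ ‖H ^ k‖ * ‖Θ 0‖ + ∑ j ∈ range k, ‖H ^ (k - 1 - j)‖ * ‖E j‖ :=
        l2_norm_pow_mulVec_add_sum_le H (Θ 0) E k
    _ ≤ c₃ * γbar ^ k * ‖Θ 0‖ + c₃ * C₁ / (γ - γbar) * γ ^ k := by
        gcongr
        · exact hHk k
        · exact sum_range_mul_le_of_le_geom (fun _ => norm_nonneg _) (fun _ => norm_nonneg _)
            hHk hEk hγbar.le hγ k
    _ ≤ c₃ * γ ^ k * ‖Θ 0‖ + c₃ * C₁ / (γ - γbar) * γ ^ k := by gcongr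
    _ = (c₃ * ‖Θ 0‖ + c₃ * C₁ / (γ - γbar)) * γ ^ k := by ring

/-- induction step for linear convergence. If `Θ(k+1) ≤ HΘ(k) + E(k)`
componentwise with `H` entrywise nonnegative, `‖H^k‖ ≤ c₃·γ̄^k` (spectral norm),
`‖E(k)‖ ≤ C₁·γ^k` with `0 < γ̄ < γ`, then
`‖Θ(k)‖ ≤ (c₃‖Θ(0)‖ + c₃C₁/(γ − γ̄))·γ^k` for all `k`. -/
theorem stmt14 (H : Matrix (Fin 3) (Fin 3) ℝ)
    (hH_nonneg : ∀ i j, 0 ≤ H i j)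
    (Θ E : ℕ → EuclideanSpace ℝ (Fin 3))
    (hΘ_nonneg : ∀ k i, 0 ≤ Θ k i)
    (hE_nonneg : ∀ k i, 0 ≤ E k i)
    (hrec : ∀ k i, Θ (k + 1) i ≤ (∑ j, H i j * Θ k j) + E k i)
    (c₃ C₁ γbar γ : ℝ)
    (hc₃ : 1 ≤ c₃) (hC₁ : 0 ≤ C₁)
    (hγbar : 0 < γbar) (hγ : γbar < γ)
    (hHk : ∀ k : ℕ, ‖H ^ k‖ ≤ c₃ * γbar ^ k)
    (hEk : ∀ k : ℕ, ‖E k‖ ≤ C₁ * γ ^ k) :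
    ∀ k : ℕ, ‖Θ k‖ ≤ (c₃ * ‖Θ 0‖ + c₃ * C₁ / (γ - γbar)) * γ ^ k :=
  stmt14_general H hH_nonneg Θ E hΘ_nonneg hrec c₃ C₁ γbar γ hγbar hγ hHk hEk
end
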